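/- arXiv:2001.03443 — 2 statements merged into one kernel-verified Lean document; each statement's English description precedes it below -/
import Mathlib

section
/- Let f : R^n → R be a function, Q ⊆ R^n convex closed, and suppose for each k ≥ 0 there is a convex-in-first-argument model ψ_k with ψ_k(x,x)=0 and f(x) + ψ_k(y,x) + (μ/2)‖y−x‖² − δ₁^k ≤ f(y) ≤ f(x) + ψ_k(y,x) + (L/2)‖y−x‖² + δ₂^k for all x,y ∈ Q, where L ≥ μ ≥ 0, L > 0. Let x_{k+1} = argmin_{x∈Q}[ψ_k(x,x_k) + (L/2)‖x−x_k‖²], q = 1 − μ/L, R = ‖x_0 − x_*‖, and y_N = (Σ_{i=1}^N q^{N−i})^{-1} Σ_{i=1}^N q^{N−i} x_i. If f is convex, then f(y_N) − f(x_*) ≤ min{LR²/(2N), (LR²/2)·exp(−(μ/L)N)} + (Σ_{i=1}^N q^{N−i})^{-1} Σ_{i=1}^N q^{N−i}(δ₁^{i−1} + δ₂^{i−1}). -/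
/-!
The proximal objective `ψ_k(·, x_k) + (L/2)‖· - x_k‖²` is `L`-strongly convex, so its minimiser
`x_{k+1}` satisfies a three-point inequality. Combined with the two model bounds (the lower one at
`x_*`, the upper one at `x_{k+1}`) it gives, with `r_k = (L/2)‖x_k - x_*‖²`,
`f(x_{k+1}) - f(x_*) ≤ q r_k - r_{k+1} + δ₁^k + δ₂^k`.
Weighting step `i` by `q^{N-i}` makes the sum telescope to `q^N r_0 - r_N`, Jensen's inequality
moves `f` inside the weighted average, and `q^N / Σ q^{N-i}` is at most both `1/N` and
`q^N ≤ exp(-(μ/L) N)`.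
-/

open Finset Filter Topology

section StrongConvexity

variable {E : Type*} [NormedAddCommGroup E]

theorem StrongConvexOn.add_sq_norm_sub_le_of_isMinOn [NormedSpace ℝ E] {s : Set E} {m : ℝ}
    {φ : E → ℝ} {a z : E} (hφ : StrongConvexOn s m φ) (hmin : IsMinOn φ s a) (ha : a ∈ s)
    (hz : z ∈ s) : φ a + m / 2 * ‖z - a‖ ^ 2 ≤ φ z := by
  have hsegment : ∀ t ∈ Set.Ioo (0 : ℝ) 1, φ a + (1 - t) * (m / 2 * ‖z - a‖ ^ 2) ≤ φ z := by
    rintro t ⟨ht0, ht1⟩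
    have hmem := hφ.1 ha hz (sub_nonneg.2 ht1.le) ht0.le (sub_add_cancel 1 t)
    have hconv := hφ.2 ha hz (sub_nonneg.2 ht1.le) ht0.le (sub_add_cancel 1 t)
    have hle := isMinOn_iff.1 hmin _ hmem
    rw [norm_sub_rev, smul_eq_mul, smul_eq_mul] at hconv
    refine le_of_mul_le_mul_left ?_ ht0
    nlinarith
  have hlim : Tendsto (fun t : ℝ => φ a + (1 - t) * (m / 2 * ‖z - a‖ ^ 2)) (𝓝[>] 0)
      (𝓝 (φ a + m / 2 * ‖z - a‖ ^ 2)) := by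
    refine tendsto_nhdsWithin_of_tendsto_nhds ?_
    exact (by fun_prop : Continuous fun t : ℝ => φ a + (1 - t) * (m / 2 * ‖z - a‖ ^ 2)).tendsto' 0
      _ (by simp)
  refine le_of_tendsto hlim ?_
  filter_upwards [Ioo_mem_nhdsGT one_pos] with t ht using hsegment t ht

theorem ConvexOn.strongConvexOn_add_sq_norm_sub [InnerProductSpace ℝ E] {s : Set E} {g : E → ℝ}
    (hg : ConvexOn ℝ s g) (m : ℝ) (c : E) :
    StrongConvexOn s m fun x => g x + m / 2 * ‖x - c‖ ^ 2 := by
  rw [strongConvexOn_iff_convex]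
  have hlin : ConvexOn ℝ s fun x => -m * inner ℝ c x := ((-m) • innerₗ E c).convexOn hg.1
  have hexpand : (fun x => g x + m / 2 * ‖x - c‖ ^ 2 - m / 2 * ‖x‖ ^ 2) =
      fun x => g x + -m * inner ℝ c x + m / 2 * ‖c‖ ^ 2 := by
    funext x
    rw [norm_sub_sq_real, real_inner_comm]
    ring
  rw [hexpand]
  exact (hg.add hlin).add_const _

end StrongConvexity

theorem sum_Icc_pow_mul_sub_telescope {R : Type*} [CommRing R] (q : R) (r : ℕ → R) (N : ℕ) :
    ∑ i ∈ Icc 1 N, q ^ (N - i) * (q * r (i - 1) - r i) = q ^ N * r 0 - r N := by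
  induction N with
  | zero => simp
  | succ N ih =>
    have hshift : ∑ i ∈ Icc 1 N, q ^ (N + 1 - i) * (q * r (i - 1) - r i)
        = q * ∑ i ∈ Icc 1 N, q ^ (N - i) * (q * r (i - 1) - r i) := by
      rw [mul_sum]
      refine sum_congr rfl fun i hi => ?_
      rw [Nat.sub_add_comm (mem_Icc.1 hi).2, pow_succ]
      ring
    rw [sum_Icc_succ_top (by omega), hshift, ih, Nat.sub_self, Nat.add_sub_cancel]
    ring

section GeometricWeights

variable {q : ℝ} {N : ℕ}

theorem one_le_sum_Icc_pow_sub (hq : 0 ≤ q) (hN : 1 ≤ N) : 1 ≤ ∑ i ∈ Icc 1 N, q ^ (N - i) := by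
  simpa using single_le_sum (f := fun i => q ^ (N - i)) (fun i _ => pow_nonneg hq _)
    (mem_Icc.2 ⟨hN, le_rfl⟩)

theorem pow_mul_inv_sum_Icc_pow_sub_le_min (hq0 : 0 ≤ q) (hq1 : q ≤ 1) (hN : 1 ≤ N) :
    q ^ N * (∑ i ∈ Icc 1 N, q ^ (N - i))⁻¹ ≤ min (N : ℝ)⁻¹ (Real.exp (-(1 - q) * N)) := by
  set S := ∑ i ∈ Icc 1 N, q ^ (N - i)
  have hS : 1 ≤ S := one_le_sum_Icc_pow_sub hq0 hN
  have hNpos : (0 : ℝ) < N := by exact_mod_cast hN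
  refine le_min ?_ ?_
  · have hNS : N * q ^ N ≤ S := by
      simpa using card_nsmul_le_sum (Icc 1 N) (fun i => q ^ (N - i)) (q ^ N)
        fun i _ => pow_le_pow_of_le_one hq0 hq1 (Nat.sub_le N i)
    rw [← div_eq_mul_inv, div_le_iff₀ (by linarith), inv_mul_eq_div, le_div_iff₀ hNpos]
    linarith
  · calc q ^ N * S⁻¹ ≤ q ^ N := mul_le_of_le_one_right (pow_nonneg hq0 N) (inv_le_one_of_one_le₀ hS)
      _ ≤ Real.exp (-(1 - q)) ^ N := by
        gcongr
        simpa using Real.one_sub_le_exp_neg (1 - q)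
      _ = Real.exp (-(1 - q) * N) := by rw [mul_comm, Real.exp_nat_mul]

end GeometricWeights

section GradientMethod

variable {E : Type*} [NormedAddCommGroup E] [InnerProductSpace ℝ E]

theorem gradient_model_step_le {Q : Set E} {f ψ : E → ℝ} {μ L δ₁ δ₂ : ℝ} {x x' xstar : E}
    (hψ : ConvexOn ℝ Q ψ) (hx' : x' ∈ Q) (hxstar : xstar ∈ Q)
    (hlow : f x + ψ xstar + μ / 2 * ‖xstar - x‖ ^ 2 - δ₁ ≤ f xstar)
    (hup : f x' ≤ f x + ψ x' + L / 2 * ‖x' - x‖ ^ 2 + δ₂)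
    (hx'min : IsMinOn (fun z => ψ z + L / 2 * ‖z - x‖ ^ 2) Q x') :
    f x' - f xstar ≤ (L - μ) / 2 * ‖x - xstar‖ ^ 2 - L / 2 * ‖x' - xstar‖ ^ 2 + (δ₁ + δ₂) := by
  have hthree := (hψ.strongConvexOn_add_sq_norm_sub L x).add_sq_norm_sub_le_of_isMinOn
    hx'min hx' hxstar
  rw [norm_sub_rev xstar x] at hlow hthree
  rw [norm_sub_rev xstar x'] at hthree
  linarith

theorem ConvexOn.map_centerMass_pow_sub_le_of_step {Q : Set E} {f : E → ℝ} (hf : ConvexOn ℝ Q f)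
    {x : ℕ → E} (hx : ∀ k, x k ∈ Q) {q : ℝ} (hq : 0 ≤ q) {N : ℕ} (hN : 1 ≤ N) {fstar : ℝ}
    {r e : ℕ → ℝ} (hrN : 0 ≤ r N)
    (hstep : ∀ k, f (x (k + 1)) - fstar ≤ q * r k - r (k + 1) + e k) :
    f ((Icc 1 N).centerMass (fun i => q ^ (N - i)) x) - fstar ≤
      (∑ i ∈ Icc 1 N, q ^ (N - i))⁻¹ * (q ^ N * r 0 + ∑ i ∈ Icc 1 N, q ^ (N - i) * e (i - 1)) := by
  have hS : 0 < ∑ i ∈ Icc 1 N, q ^ (N - i) := zero_lt_one.trans_le (one_le_sum_Icc_pow_sub hq hN)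
  have hjensen := hf.map_centerMass_le (fun i _ => pow_nonneg hq (N - i)) hS fun i _ => hx i
  have hsum : ∑ i ∈ Icc 1 N, q ^ (N - i) * (f (x i) - fstar) ≤
      q ^ N * r 0 + ∑ i ∈ Icc 1 N, q ^ (N - i) * e (i - 1) := by
    calc ∑ i ∈ Icc 1 N, q ^ (N - i) * (f (x i) - fstar)
        ≤ ∑ i ∈ Icc 1 N, (q ^ (N - i) * (q * r (i - 1) - r i) + q ^ (N - i) * e (i - 1)) := by
          refine sum_le_sum fun i hi => ?_
          obtain ⟨k, rfl⟩ := Nat.exists_eq_add_of_le' (mem_Icc.1 hi).1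
          rw [← mul_add, Nat.add_sub_cancel]
          exact mul_le_mul_of_nonneg_left (hstep k) (pow_nonneg hq _)
      _ = q ^ N * r 0 - r N + ∑ i ∈ Icc 1 N, q ^ (N - i) * e (i - 1) := by
          rw [sum_add_distrib, sum_Icc_pow_mul_sub_telescope]
      _ ≤ q ^ N * r 0 + ∑ i ∈ Icc 1 N, q ^ (N - i) * e (i - 1) := by linarith
  have hmass : (Icc 1 N).centerMass (fun i => q ^ (N - i)) (f ∘ x) - fstar =
      (∑ i ∈ Icc 1 N, q ^ (N - i))⁻¹ * ∑ i ∈ Icc 1 N, q ^ (N - i) * (f (x i) - fstar) := by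
    simp only [centerMass, Function.comp_apply, smul_eq_mul, mul_sub, sum_sub_distrib, ← sum_mul]
    field_simp
  calc _ ≤ (Icc 1 N).centerMass (fun i => q ^ (N - i)) (f ∘ x) - fstar := by linarith
    _ ≤ _ := hmass ▸ mul_le_mul_of_nonneg_left hsum (inv_nonneg.2 hS.le)

end GradientMethod

theorem gm_model_convergence_general (n : ℕ) (f : EuclideanSpace ℝ (Fin n) → ℝ)
    (Q : Set (EuclideanSpace ℝ (Fin n)))
    (hfconv : ConvexOn ℝ Q f)
    (ψ : ℕ → EuclideanSpace ℝ (Fin n) → EuclideanSpace ℝ (Fin n) → ℝ)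
    (δ₁ δ₂ : ℕ → ℝ) (μ L : ℝ) (hμ : 0 ≤ μ) (hμL : μ ≤ L) (hL : 0 < L)
    (hψconv : ∀ k, ∀ x ∈ Q, ConvexOn ℝ Q (fun y => ψ k y x))
    (hlow : ∀ k, ∀ x ∈ Q, ∀ y ∈ Q,
      f x + ψ k y x + (μ / 2) * ‖y - x‖ ^ 2 - δ₁ k ≤ f y)
    (hup : ∀ k, ∀ x ∈ Q, ∀ y ∈ Q,
      f y ≤ f x + ψ k y x + (L / 2) * ‖y - x‖ ^ 2 + δ₂ k)
    (x : ℕ → EuclideanSpace ℝ (Fin n)) (hx : ∀ k, x k ∈ Q)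
    (hargmin : ∀ k, ∀ z ∈ Q,
      ψ k (x (k + 1)) (x k) + (L / 2) * ‖x (k + 1) - x k‖ ^ 2 ≤
      ψ k z (x k) + (L / 2) * ‖z - x k‖ ^ 2)
    (xstar : EuclideanSpace ℝ (Fin n)) (hxstar : xstar ∈ Q)
    (N : ℕ) (hN : 1 ≤ N) :
    f ((∑ i ∈ Finset.Icc 1 N, (1 - μ / L) ^ (N - i))⁻¹ •
        ∑ i ∈ Finset.Icc 1 N, (1 - μ / L) ^ (N - i) • x i) - f xstar ≤
      min (L * ‖x 0 - xstar‖ ^ 2 / (2 * N))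
          (L * ‖x 0 - xstar‖ ^ 2 / 2 * Real.exp (-(μ / L) * N))
        + (∑ i ∈ Finset.Icc 1 N, (1 - μ / L) ^ (N - i))⁻¹ *
            ∑ i ∈ Finset.Icc 1 N, (1 - μ / L) ^ (N - i) * (δ₁ (i - 1) + δ₂ (i - 1)) := by
  have hq0 : 0 ≤ 1 - μ / L := sub_nonneg.2 ((div_le_one hL).2 hμL)
  have hq1 : 1 - μ / L ≤ 1 := sub_le_self _ (div_nonneg hμ hL.le)
  have hstep : ∀ k, f (x (k + 1)) - f xstar ≤ (1 - μ / L) * (L / 2 * ‖x k - xstar‖ ^ 2) -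
      L / 2 * ‖x (k + 1) - xstar‖ ^ 2 + (δ₁ k + δ₂ k) := by
    intro k
    have hcoeff : (1 - μ / L) * (L / 2) = (L - μ) / 2 := by field_simp
    rw [← mul_assoc, hcoeff]
    exact gradient_model_step_le (hψconv k _ (hx k)) (hx (k + 1)) hxstar
      (hlow k _ (hx k) _ hxstar) (hup k _ (hx k) _ (hx (k + 1))) (isMinOn_iff.2 (hargmin k))
  have havg := hfconv.map_centerMass_pow_sub_le_of_step hx hq0 hN (by positivity) hstep
  have hweights := pow_mul_inv_sum_Icc_pow_sub_le_min hq0 hq1 hN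
  rw [sub_sub_cancel] at hweights
  calc _ ≤ _ := havg
    _ = L * ‖x 0 - xstar‖ ^ 2 / 2 * ((1 - μ / L) ^ N * (∑ i ∈ Icc 1 N, (1 - μ / L) ^ (N - i))⁻¹)
        + (∑ i ∈ Icc 1 N, (1 - μ / L) ^ (N - i))⁻¹ *
            ∑ i ∈ Icc 1 N, (1 - μ / L) ^ (N - i) * (δ₁ (i - 1) + δ₂ (i - 1)) := by ring
    _ ≤ L * ‖x 0 - xstar‖ ^ 2 / 2 * min (N : ℝ)⁻¹ (Real.exp (-(μ / L) * N))
        + (∑ i ∈ Icc 1 N, (1 - μ / L) ^ (N - i))⁻¹ *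
            ∑ i ∈ Icc 1 N, (1 - μ / L) ^ (N - i) * (δ₁ (i - 1) + δ₂ (i - 1)) := by gcongr
    _ = _ := by
      rw [mul_min_of_nonneg _ _ (by positivity)]
      congr 2
      ring

theorem gm_model_convergence (n : ℕ) (f : EuclideanSpace ℝ (Fin n) → ℝ)
    (Q : Set (EuclideanSpace ℝ (Fin n))) (hQconv : Convex ℝ Q) (hQclosed : IsClosed Q)
    (hfconv : ConvexOn ℝ Q f)
    (ψ : ℕ → EuclideanSpace ℝ (Fin n) → EuclideanSpace ℝ (Fin n) → ℝ)
    (δ₁ δ₂ : ℕ → ℝ) (μ L : ℝ) (hμ : 0 ≤ μ) (hμL : μ ≤ L) (hL : 0 < L)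
    (hψconv : ∀ k, ∀ x ∈ Q, ConvexOn ℝ Q (fun y => ψ k y x))
    (hψ0 : ∀ k, ∀ x ∈ Q, ψ k x x = 0)
    (hlow : ∀ k, ∀ x ∈ Q, ∀ y ∈ Q,
      f x + ψ k y x + (μ / 2) * ‖y - x‖ ^ 2 - δ₁ k ≤ f y)
    (hup : ∀ k, ∀ x ∈ Q, ∀ y ∈ Q,
      f y ≤ f x + ψ k y x + (L / 2) * ‖y - x‖ ^ 2 + δ₂ k)
    (x : ℕ → EuclideanSpace ℝ (Fin n)) (hx : ∀ k, x k ∈ Q)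
    (hargmin : ∀ k, ∀ z ∈ Q,
      ψ k (x (k + 1)) (x k) + (L / 2) * ‖x (k + 1) - x k‖ ^ 2 ≤
      ψ k z (x k) + (L / 2) * ‖z - x k‖ ^ 2)
    (xstar : EuclideanSpace ℝ (Fin n)) (hxstar : xstar ∈ Q)
    (hmin : ∀ z ∈ Q, f xstar ≤ f z)
    (N : ℕ) (hN : 1 ≤ N) :
    f ((∑ i ∈ Finset.Icc 1 N, (1 - μ / L) ^ (N - i))⁻¹ •
        ∑ i ∈ Finset.Icc 1 N, (1 - μ / L) ^ (N - i) • x i) - f xstar ≤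
      min (L * ‖x 0 - xstar‖ ^ 2 / (2 * N))
          (L * ‖x 0 - xstar‖ ^ 2 / 2 * Real.exp (-(μ / L) * N))
        + (∑ i ∈ Finset.Icc 1 N, (1 - μ / L) ^ (N - i))⁻¹ *
            ∑ i ∈ Finset.Icc 1 N, (1 - μ / L) ^ (N - i) * (δ₁ (i - 1) + δ₂ (i - 1)) :=
  gm_model_convergence_general n f Q hfconv ψ δ₁ δ₂ μ L hμ hμL hL hψconv hlow hup x hx hargmin xstar
    hxstar N hN
end

section
/- Let f : R^n → R, Q ⊆ R^n convex closed, and suppose ψ(·, y_{k+1}) is convex with ψ(y_{k+1}, y_{k+1}) = 0 and f(y_{k+1}) + ψ(x, y_{k+1}) + (μ/2)‖x − y_{k+1}‖² − δ₁(x, y_{k+1}) ≤ f(x) ≤ f(y_{k+1}) + ψ(x, y_{k+1}) + (L/2)‖x − y_{k+1}‖² + δ₂ for all x ∈ Q. Let α_{k+1} be the largest root of A_{k+1}(1 + A_k μ) = L α², A_{k+1} = A_k + α_{k+1}, y_{k+1} = (α_{k+1} u_k + A_k x_k)/A_{k+1}, u_{k+1} = argmin_{x∈Q}[α_{k+1}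 ψ(x, y_{k+1}) + ((1 + A_k μ)/2)‖x − u_k‖² + (α_{k+1} μ /2)‖x − y_{k+1}‖²], x_{k+1} = (α_{k+1} u_{k+1} + A_k x_k)/A_{k+1}. Then for all x ∈ Q: A_{k+1} f(x_{k+1}) − A_k f(x_k) + ((1 + A_{k+1}μ)/2)‖x − u_{k+1}‖² − ((1 + A_k μ)/2)‖x − u_k‖² ≤ α_{k+1} f(x) + A_k δ₁(x_k, y_{k+1}) + α_{k+1} δ₁(x, y_{k+1}) + A_{k+1} δ₂. -/
/-! The proximal objective minimised by `u_{k+1}` is `(1 + A_{k+1} μ)`-strongly convex, so it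
exceeds its minimum at any `x ∈ Q` by at least `(1 + A_{k+1} μ)/2 ‖x - u_{k+1}‖²`. Bound
`f(x_{k+1})` by the upper model at `y_{k+1}` and split `ψ(x_{k+1}, y_{k+1})` by convexity along
`x_{k+1} = (α_{k+1} u_{k+1} + A_k x_k)/A_{k+1}`. Since `x_{k+1} - y_{k+1} = (α_{k+1}/A_{k+1})
(u_{k+1} - u_k)`, the equation defining `α_{k+1}` turns the `L`-term into exactly the proximal
term `(1 + A_k μ)/2 ‖u_{k+1} - u_k‖²`. The lower model at `x` and at `x_k` then closes the
estimate, the remaining `μ`-terms having the right sign.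
-/

open Filter Topology

section StrongConvexity

variable {E : Type*} [NormedAddCommGroup E] [NormedSpace ℝ E] {s : Set E} {m n : ℝ}
  {f g : E → ℝ}

lemma StrongConvexOn.add (hf : StrongConvexOn s m f) (hg : StrongConvexOn s n g) :
    StrongConvexOn s (m + n) (f + g) := by
  refine UniformConvexOn.mono (fun r ↦ le_of_eq ?_) (UniformConvexOn.add hf hg)
  simp only [Pi.add_apply]
  ring

lemma ConvexOn.add_strongConvexOn (hf : ConvexOn ℝ s f) (hg : StrongConvexOn s m g) :
    StrongConvexOn s m (f + g) := by
  simpa using (strongConvexOn_zero.mpr hf).add hg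

lemma StrongConvexOn.add_sq_norm_sub_le_of_isMinOn_s10 {u x : E} (hf : StrongConvexOn s m f)
    (hu : u ∈ s) (hmin : IsMinOn f s u) (hx : x ∈ s) :
    f u + m / 2 * ‖x - u‖ ^ 2 ≤ f x := by
  set K := m / 2 * ‖x - u‖ ^ 2 with hK
  have segment_bound : ∀ t ∈ Set.Ioo (0 : ℝ) 1, f u + (1 - t) * K ≤ f x := by
    rintro t ⟨ht₀, ht₁⟩
    have hcombo := hf.2 hx hu ht₀.le (sub_nonneg.mpr ht₁.le) (add_sub_cancel t 1)
    have hmin_t : f u ≤ f (t • x + (1 - t) • u) :=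
      hmin (hf.1 hx hu ht₀.le (sub_nonneg.mpr ht₁.le) (add_sub_cancel t 1))
    simp only [smul_eq_mul, ← hK] at hcombo
    refine le_of_mul_le_mul_left ?_ ht₀
    linarith
  have hlim : Tendsto (fun t : ℝ ↦ f u + (1 - t) * K) (𝓝[>] 0) (𝓝 (f u + K)) := by
    have hcont : Continuous fun t : ℝ ↦ f u + (1 - t) * K := by fun_prop
    simpa using (hcont.tendsto 0).mono_left nhdsWithin_le_nhds
  exact le_of_tendsto hlim (by filter_upwards [Ioo_mem_nhdsGT one_pos] using segment_bound)

end StrongConvexity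

lemma strongConvexOn_mul_sq_norm_sub {E : Type*} [NormedAddCommGroup E] [InnerProductSpace ℝ E]
    {s : Set E} (hs : Convex ℝ s) (c : ℝ) (p : E) :
    StrongConvexOn s c fun z ↦ c / 2 * ‖z - p‖ ^ 2 := by
  rw [strongConvexOn_iff_convex]
  have affine : (fun z ↦ c / 2 * ‖z - p‖ ^ 2 - c / 2 * ‖z‖ ^ 2) =
      fun z ↦ ((-c) • innerₛₗ ℝ p) z + c / 2 * ‖p‖ ^ 2 := by
    ext z
    rw [norm_sub_sq_real, LinearMap.smul_apply, innerₛₗ_apply_apply, real_inner_comm,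
      smul_eq_mul]
    ring
  rw [affine]
  exact (LinearMap.convexOn _ hs).add_const _

section WeightedAverage

variable {𝕜 E : Type*} [Field 𝕜] [AddCommGroup E] [Module 𝕜 E] {x y : E} {a b w : 𝕜}

lemma inv_smul_add_smul_eq_div_smul_add_div_smul :
    w⁻¹ • (a • x + b • y) = (a / w) • x + (b / w) • y := by
  module

variable [LinearOrder 𝕜] [IsStrictOrderedRing 𝕜] {s : Set E} {g : E → 𝕜}

lemma Convex.inv_smul_add_smul_mem (hs : Convex 𝕜 s) (hx : x ∈ s) (hy : y ∈ s) (ha : 0 ≤ a)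
    (hb : 0 ≤ b) (hab : a + b = w) (hw : 0 < w) : w⁻¹ • (a • x + b • y) ∈ s := by
  subst hab
  rw [inv_smul_add_smul_eq_div_smul_add_div_smul]
  exact convex_iff_div.mp hs hx hy ha hb hw

lemma ConvexOn.mul_map_inv_smul_add_smul_le (hg : ConvexOn 𝕜 s g) (hx : x ∈ s) (hy : y ∈ s)
    (ha : 0 ≤ a) (hb : 0 ≤ b) (hab : a + b = w) (hw : 0 < w) :
    w * g (w⁻¹ • (a • x + b • y)) ≤ a * g x + b * g y := by
  subst hab
  have h := (convexOn_iff_div.mp hg).2 hx hy ha hb hw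
  rw [← inv_smul_add_smul_eq_div_smul_add_div_smul, smul_eq_mul, smul_eq_mul] at h
  calc (a + b) * g ((a + b)⁻¹ • (a • x + b • y))
      ≤ (a + b) * (a / (a + b) * g x + b / (a + b) * g y) := by gcongr
    _ = a * g x + b * g y := by field_simp

end WeightedAverage

theorem fgm_one_step_general (n : ℕ) (f : EuclideanSpace ℝ (Fin n) → ℝ)
    (Q : Set (EuclideanSpace ℝ (Fin n))) (hQconv : Convex ℝ Q)
    (ψ : EuclideanSpace ℝ (Fin n) → EuclideanSpace ℝ (Fin n) → ℝ)
    (δ₁ : EuclideanSpace ℝ (Fin n) → EuclideanSpace ℝ (Fin n) → ℝ) (δ₂ : ℝ)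
    (μ L Ak αk1 : ℝ) (hμ : 0 ≤ μ) (hAk : 0 ≤ Ak) (hαk1 : 0 < αk1)
    (xk uk uk1 yk1 xk1 : EuclideanSpace ℝ (Fin n))
    (hxkQ : xk ∈ Q) (huk1Q : uk1 ∈ Q)
    (hψconv : ConvexOn ℝ Q (fun x => ψ x yk1))
    (hlow : ∀ x ∈ Q,
      f yk1 + ψ x yk1 + (μ / 2) * ‖x - yk1‖ ^ 2 - δ₁ x yk1 ≤ f x)
    (hup : ∀ x ∈ Q,
      f x ≤ f yk1 + ψ x yk1 + (L / 2) * ‖x - yk1‖ ^ 2 + δ₂)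
    (hroot : (Ak + αk1) * (1 + Ak * μ) = L * αk1 ^ 2)
    (hy : yk1 = (Ak + αk1)⁻¹ • (αk1 • uk + Ak • xk))
    (hargmin : ∀ z ∈ Q,
      αk1 * ψ uk1 yk1 + ((1 + Ak * μ) / 2) * ‖uk1 - uk‖ ^ 2
          + (αk1 * μ / 2) * ‖uk1 - yk1‖ ^ 2 ≤
      αk1 * ψ z yk1 + ((1 + Ak * μ) / 2) * ‖z - uk‖ ^ 2
          + (αk1 * μ / 2) * ‖z - yk1‖ ^ 2)
    (hx : xk1 = (Ak + αk1)⁻¹ • (αk1 • uk1 + Ak • xk)) :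
    ∀ x ∈ Q,
      (Ak + αk1) * f xk1 - Ak * f xk
          + ((1 + (Ak + αk1) * μ) / 2) * ‖x - uk1‖ ^ 2
          - ((1 + Ak * μ) / 2) * ‖x - uk‖ ^ 2 ≤
        αk1 * f x + Ak * δ₁ xk yk1 + αk1 * δ₁ x yk1 + (Ak + αk1) * δ₂ := by
  intro x hxQ
  have hA : 0 < Ak + αk1 := by positivity
  have hxk1Q : xk1 ∈ Q :=
    hx ▸ hQconv.inv_smul_add_smul_mem huk1Q hxkQ hαk1.le hAk (add_comm _ _) hA
  have hψ_xk1 : (Ak + αk1) * ψ xk1 yk1 ≤ αk1 * ψ uk1 yk1 + Ak * ψ xk yk1 :=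
    hx ▸ hψconv.mul_map_inv_smul_add_smul_le huk1Q hxkQ hαk1.le hAk (add_comm _ _) hA
  have hstep : (Ak + αk1) * (L / 2 * ‖xk1 - yk1‖ ^ 2) = (1 + Ak * μ) / 2 * ‖uk1 - uk‖ ^ 2 := by
    have hdiff : xk1 - yk1 = (αk1 / (Ak + αk1)) • (uk1 - uk) := by rw [hx, hy]; module
    rw [hdiff, norm_smul, Real.norm_eq_abs, mul_pow, sq_abs]
    field_simp
    linear_combination (-‖uk1 - uk‖ ^ 2) * hroot
  have hprox : StrongConvexOn Q (1 + (Ak + αk1) * μ) fun z ↦ αk1 * ψ z yk1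
      + ((1 + Ak * μ) / 2) * ‖z - uk‖ ^ 2 + (αk1 * μ / 2) * ‖z - yk1‖ ^ 2 := by
    rw [show 1 + (Ak + αk1) * μ = 1 + Ak * μ + αk1 * μ by ring]
    exact ((hψconv.smul hαk1.le).add_strongConvexOn
      (strongConvexOn_mul_sq_norm_sub hQconv (1 + Ak * μ) uk)).add
      (strongConvexOn_mul_sq_norm_sub hQconv (αk1 * μ) yk1)
  have hthree := hprox.add_sq_norm_sub_le_of_isMinOn_s10 huk1Q hargmin hxQ
  have hup_xk1 := mul_le_mul_of_nonneg_left (hup xk1 hxk1Q) hA.le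
  have hlow_x := mul_le_mul_of_nonneg_left (hlow x hxQ) hαk1.le
  have hlow_xk := mul_le_mul_of_nonneg_left (hlow xk hxkQ) hAk
  have hquad_xk : 0 ≤ Ak * (μ * ‖xk - yk1‖ ^ 2) := by positivity
  have hquad_uk1 : 0 ≤ αk1 * (μ * ‖uk1 - yk1‖ ^ 2) := by positivity
  linarith

theorem fgm_one_step (n : ℕ) (f : EuclideanSpace ℝ (Fin n) → ℝ)
    (Q : Set (EuclideanSpace ℝ (Fin n))) (hQconv : Convex ℝ Q) (hQclosed : IsClosed Q)
    (ψ : EuclideanSpace ℝ (Fin n) → EuclideanSpace ℝ (Fin n) → ℝ)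
    (δ₁ : EuclideanSpace ℝ (Fin n) → EuclideanSpace ℝ (Fin n) → ℝ) (δ₂ : ℝ)
    (μ L Ak αk1 : ℝ) (hμ : 0 ≤ μ) (hL : 0 < L) (hAk : 0 ≤ Ak) (hαk1 : 0 < αk1)
    (xk uk uk1 yk1 xk1 : EuclideanSpace ℝ (Fin n))
    (hxkQ : xk ∈ Q) (hukQ : uk ∈ Q) (huk1Q : uk1 ∈ Q) (hyk1Q : yk1 ∈ Q)
    (hψconv : ConvexOn ℝ Q (fun x => ψ x yk1))
    (hψ0 : ψ yk1 yk1 = 0)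
    (hlow : ∀ x ∈ Q,
      f yk1 + ψ x yk1 + (μ / 2) * ‖x - yk1‖ ^ 2 - δ₁ x yk1 ≤ f x)
    (hup : ∀ x ∈ Q,
      f x ≤ f yk1 + ψ x yk1 + (L / 2) * ‖x - yk1‖ ^ 2 + δ₂)
    (hroot : (Ak + αk1) * (1 + Ak * μ) = L * αk1 ^ 2)
    (hy : yk1 = (Ak + αk1)⁻¹ • (αk1 • uk + Ak • xk))
    (hargmin : ∀ z ∈ Q,
      αk1 * ψ uk1 yk1 + ((1 + Ak * μ) / 2) * ‖uk1 - uk‖ ^ 2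
          + (αk1 * μ / 2) * ‖uk1 - yk1‖ ^ 2 ≤
      αk1 * ψ z yk1 + ((1 + Ak * μ) / 2) * ‖z - uk‖ ^ 2
          + (αk1 * μ / 2) * ‖z - yk1‖ ^ 2)
    (hx : xk1 = (Ak + αk1)⁻¹ • (αk1 • uk1 + Ak • xk)) :
    ∀ x ∈ Q,
      (Ak + αk1) * f xk1 - Ak * f xk
          + ((1 + (Ak + αk1) * μ) / 2) * ‖x - uk1‖ ^ 2
          - ((1 + Ak * μ) / 2) * ‖x - uk‖ ^ 2 ≤
        αk1 * f x + Ak * δ₁ xk yk1 + αk1 * δ₁ x yk1 + (Ak + αk1) * δ₂ :=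
  fgm_one_step_general n f Q hQconv ψ δ₁ δ₂ μ L Ak αk1 hμ hAk hαk1 xk uk uk1 yk1 xk1 hxkQ huk1Q
    hψconv hlow hup hroot hy hargmin hx
end
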